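/- (Theorem 3: Bertrand mates) Let α : ℝ → ℝ³ be a twice continuously differentiable unit-speed curve with unit tangent T(s) = α′(s), curvature κ(s) = ‖α″(s)‖ > 0, principal normal N(s) = α″(s)/κ(s), and binormal B(s) = T(s) × N(s). Let θ ∈ ℝ with sin θ > 0, and suppose a ∈ ℝ³ satisfies a = cos θ · T(s) + sin θ · B(s) for all s. For s₀ ∈ ℝ define ᾱ(s) = α(s₀) + sin θ · α(s) + (s − s₀) cos θ · a, and let T̄(s) = ᾱ′(s)/‖ᾱ′(s)‖, B̄(s) = (ᾱ′(s) × ᾱ″(s))/‖ᾱ′(s) × ᾱ″(s)‖, N̄(s) = B̄(s) × T̄(s). Then for every s, N̄(s) = N(s); in particular the principal normal vectors of ᾱ and α are linearly dependent at every point, i.e. ᾱ and α are Bertrand mates. -/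

import Mathlib

open Real

noncomputable def cross3 (u v : EuclideanSpace ℝ (Fin 3)) : EuclideanSpace ℝ (Fin 3) :=
  WithLp.toLp 2 ![u 1 * v 2 - u 2 * v 1, u 2 * v 0 - u 0 * v 2, u 0 * v 1 - u 1 * v 0]

/-!
Along `α` the velocity of `ᾱ` is `sin θ • T + cos θ • a`, a combination of `T` and `B`, hence
orthogonal to `N`, and nonzero because its `T`-component is `sin θ + cos² θ > 0`; its acceleration
is `(sin θ * κ) • N`, a positive multiple of `N`. For `v ⊥ n` with `‖n‖ = 1` and `c > 0`, the
triple product expansion gives `(v × c n) × v = c ‖v‖² n` while `‖v × c n‖ = c ‖v‖`, so the Frenet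
normal `B̄ × T̄` of `ᾱ` is exactly `N`.
-/

open RealInnerProductSpace Matrix WithLp

section Cross3

variable (u v w : EuclideanSpace ℝ (Fin 3))

lemma cross3_eq_crossProduct : cross3 u v = toLp 2 (ofLp u ⨯₃ ofLp v) := by
  rw [cross_apply]; rfl

lemma real_inner_eq_dotProduct : ⟪u, v⟫ = ofLp u ⬝ᵥ ofLp v := by
  rw [EuclideanSpace.inner_eq_star_dotProduct, star_trivial, dotProduct_comm]

lemma cross3_smul_left (r : ℝ) : cross3 (r • u) v = r • cross3 u v := by
  simp only [cross3_eq_crossProduct, ofLp_smul, map_smul, LinearMap.smul_apply, toLp_smul]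

lemma cross3_smul_right (r : ℝ) : cross3 u (r • v) = r • cross3 u v := by
  simp only [cross3_eq_crossProduct, ofLp_smul, map_smul, toLp_smul]

lemma inner_self_cross3 : ⟪u, cross3 u v⟫ = 0 := by
  rw [real_inner_eq_dotProduct, cross3_eq_crossProduct, ofLp_toLp, dot_self_cross]

lemma inner_cross3_self : ⟪v, cross3 u v⟫ = 0 := by
  rw [real_inner_eq_dotProduct, cross3_eq_crossProduct, ofLp_toLp, dot_cross_self]

lemma cross3_cross3 : cross3 (cross3 u v) w = ⟪u, w⟫ • v - ⟪v, w⟫ • u := by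
  simp only [cross3_eq_crossProduct, real_inner_eq_dotProduct,
    cross_cross_eq_smul_sub_smul, toLp_sub, toLp_smul, toLp_ofLp]

lemma norm_cross3_of_inner_eq_zero (h : ⟪u, v⟫ = 0) : ‖cross3 u v‖ = ‖u‖ * ‖v‖ := by
  have hsq : ‖cross3 u v‖ ^ 2 = (‖u‖ * ‖v‖) ^ 2 := by
    simp only [← real_inner_self_eq_norm_sq, mul_pow, real_inner_eq_dotProduct] at h ⊢
    rw [cross3_eq_crossProduct, ofLp_toLp, cross_dot_cross, h]
    ring
  exact (pow_left_inj₀ (norm_nonneg _) (by positivity) two_ne_zero).mp hsq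

end Cross3

/-- The principal normal `B × T` of the Frenet frame of a regular curve whose velocity and
acceleration at the point are `v` and `u`. -/
noncomputable def frenetNormal (v u : EuclideanSpace ℝ (Fin 3)) : EuclideanSpace ℝ (Fin 3) :=
  cross3 (‖cross3 v u‖⁻¹ • cross3 v u) (‖v‖⁻¹ • v)

lemma frenetNormal_smul_of_inner_eq_zero {v n : EuclideanSpace ℝ (Fin 3)} (hv : v ≠ 0)
    (hn : ‖n‖ = 1) (hvn : ⟪v, n⟫ = 0) {c : ℝ} (hc : 0 < c) :
    frenetNormal v (c • n) = n := by
  have hv' : ‖v‖ ≠ 0 := norm_ne_zero_iff.mpr hv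
  have hnorm : ‖cross3 v (c • n)‖ = c * ‖v‖ := by
    rw [cross3_smul_right, norm_smul, norm_cross3_of_inner_eq_zero v n hvn, hn,
      Real.norm_of_nonneg hc.le, mul_one]
  rw [frenetNormal, hnorm]
  simp only [cross3_smul_left, cross3_smul_right]
  rw [cross3_cross3, real_inner_comm v n, hvn, zero_smul, sub_zero, real_inner_self_eq_norm_sq,
    smul_smul, smul_smul, smul_smul]
  convert one_smul ℝ n using 2
  field_simp

lemma inner_hasDerivAt_eq_zero_of_norm_eq {E : Type*} [NormedAddCommGroup E]
    [InnerProductSpace ℝ E] {f : ℝ → E} {f' : E} {x c : ℝ} (hf : ∀ t, ‖f t‖ = c)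
    (hd : HasDerivAt f f' x) : ⟪f x, f'⟫ = 0 := by
  have hconst : HasDerivAt (‖f ·‖ ^ 2) 0 x := by
    simp only [hf]; exact hasDerivAt_const x _
  simpa using hd.norm_sq.unique hconst

lemma deriv_const_add_smul_add_smul_const {E : Type*} [NormedAddCommGroup E] [NormedSpace ℝ E]
    {α : ℝ → E} (hα : Differentiable ℝ α) (p a : E) (c d s₀ : ℝ) :
    deriv (fun s ↦ p + c • α s + ((s - s₀) * d) • a) = fun s ↦ c • deriv α s + d • a := by
  funext s
  have hlin : HasDerivAt (fun s : ℝ ↦ ((s - s₀) * d) • a) ((1 * d) • a) s :=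
    (((hasDerivAt_id s).sub_const s₀).mul_const d).smul_const a
  rw [one_mul] at hlin
  exact ((((hα s).hasDerivAt.const_smul c).const_add p).add hlin).deriv

theorem associated_curve_bertrand_mate
    (α : ℝ → EuclideanSpace ℝ (Fin 3))
    (hα : ContDiff ℝ 2 α)
    (T N B : ℝ → EuclideanSpace ℝ (Fin 3)) (κ : ℝ → ℝ)
    (hT : ∀ s, T s = deriv α s)
    (hunit : ∀ s, ‖deriv α s‖ = 1)
    (hκ : ∀ s, κ s = ‖deriv (deriv α) s‖)
    (hκpos : ∀ s, 0 < κ s)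
    (hN : ∀ s, N s = (κ s)⁻¹ • deriv (deriv α) s)
    (hB : ∀ s, B s = cross3 (T s) (N s))
    (θ : ℝ) (hθ : 0 < Real.sin θ)
    (a : EuclideanSpace ℝ (Fin 3))
    (ha : ∀ s, a = Real.cos θ • T s + Real.sin θ • B s)
    (s₀ : ℝ)
    (ᾱ : ℝ → EuclideanSpace ℝ (Fin 3))
    (hᾱ : ∀ s, ᾱ s = α s₀ + Real.sin θ • α s + ((s - s₀) * Real.cos θ) • a)
    (T' B' N' : ℝ → EuclideanSpace ℝ (Fin 3))
    (hT' : ∀ s, T' s = ‖deriv ᾱ s‖⁻¹ • deriv ᾱ s)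
    (hB' : ∀ s, B' s = ‖cross3 (deriv ᾱ s) (deriv (deriv ᾱ) s)‖⁻¹ •
        cross3 (deriv ᾱ s) (deriv (deriv ᾱ) s))
    (hN' : ∀ s, N' s = cross3 (B' s) (T' s)) :
    ∀ s, N' s = N s := by
  intro s
  have hvel : deriv ᾱ = fun s ↦ sin θ • T s + cos θ • a := by
    simp only [funext hᾱ, hT]
    exact deriv_const_add_smul_add_smul_const (hα.differentiable (by norm_num)) _ _ _ _ _
  have hacc : deriv (deriv ᾱ) s = (sin θ * κ s) • N s := by
    simp only [hvel, hT, deriv_add_const, deriv_fun_const_smul_field, hN, smul_smul]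
    rw [mul_assoc, mul_inv_cancel₀ (hκpos s).ne', mul_one]
  have hNunit : ‖N s‖ = 1 := by
    rw [hN, norm_smul, ← hκ, norm_inv, Real.norm_of_nonneg (hκpos s).le,
      inv_mul_cancel₀ (hκpos s).ne']
  have hTT : ⟪T s, T s⟫ = 1 := by
    rw [real_inner_self_eq_norm_sq, hT, hunit, one_pow]
  have hTN : ⟪T s, N s⟫ = 0 := by
    rw [hT, hN, real_inner_smul_right, inner_hasDerivAt_eq_zero_of_norm_eq hunit
      (hα.differentiable_deriv_two s).hasDerivAt, mul_zero]
  have hBT : ⟪B s, T s⟫ = 0 := by rw [real_inner_comm, hB, inner_self_cross3]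
  have hBN : ⟪B s, N s⟫ = 0 := by rw [real_inner_comm, hB, inner_cross3_self]
  have hvN : ⟪sin θ • T s + cos θ • a, N s⟫ = 0 := by
    simp only [ha s, inner_add_left, real_inner_smul_left, hTN, hBN, mul_zero, add_zero]
  have hvT : ⟪sin θ • T s + cos θ • a, T s⟫ = sin θ + cos θ ^ 2 := by
    simp only [ha s, inner_add_left, real_inner_smul_left, hTT, hBT]; ring
  have hv : sin θ • T s + cos θ • a ≠ 0 := by
    intro h; rw [h, inner_zero_left] at hvT; nlinarith [sq_nonneg (cos θ)]
  rw [hN', hB', hT', hacc, hvel]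
  exact frenetNormal_smul_of_inner_eq_zero hv hNunit hvN (mul_pos hθ (hκpos s))
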